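/- Let N be a positive integer, p > 0, σ² > 0, α > 0, h ∈ ℂ, and a, b : Fin N → ℂ. Then log₂(1 + p(|h| + α ∑_{n} |a_n · b_n|)² / σ²) is the greatest element (IsGreatest) of the set { log₂(1 + p |h + α ∑_{n} e^{iθ_n} a_n b_n|² / σ²) : θ ∈ ℝ^N }; i.e., it is an upper bound over all phase-shift vectors θ and it is attained (at θ_n = arg(h) − arg(a_n b_n)). -/

import Mathlib

open Complex Finset

lemma irs_exp_arg (x : ℝ) (z : ℂ) :
    Complex.exp (Complex.I * ((x - Complex.arg z : ℝ) : ℂ)) * z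
      = (‖z‖ : ℂ) * Complex.exp ((x : ℂ) * Complex.I) := by
  nth_rewrite 2 [← Complex.norm_mul_exp_arg_mul_I z]
  rw [show Complex.exp (Complex.I * ((x - Complex.arg z : ℝ) : ℂ)) *
      ((‖z‖ : ℂ) * Complex.exp ((Complex.arg z : ℂ) * Complex.I))
      = (‖z‖ : ℂ) * (Complex.exp (Complex.I * ((x - Complex.arg z : ℝ) : ℂ)) *
        Complex.exp ((Complex.arg z : ℂ) * Complex.I)) by ring]
  rw [← Complex.exp_add]
  congr 2
  push_cast
  ring

/-- Lemma 1 (capacity of the IRS-supported network): the rate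
`log₂(1 + p(|h| + α ∑ₙ |aₙ bₙ|)²/σ²)` is the greatest element of the set of
achievable rates `log₂(1 + p|h + α ∑ₙ e^{iθₙ} aₙ bₙ|²/σ²)` over all phase-shift
vectors `θ ∈ ℝᴺ`; it is attained at `θₙ = arg h − arg(aₙ bₙ)`. -/
theorem irs_capacity (N : ℕ) (hN : 0 < N) (p σ2 α : ℝ)
    (hp : 0 < p) (hσ : 0 < σ2) (hα : 0 < α)
    (h : ℂ) (a b : Fin N → ℂ) :
    IsGreatest
      { r : ℝ | ∃ θ : Fin N → ℝ,
          r = Real.logb 2 (1 + p * ‖(h + (α : ℂ) *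
                ∑ n : Fin N, Complex.exp (Complex.I * (θ n : ℂ)) * (a n * b n))‖ ^ 2 / σ2) }
      (Real.logb 2 (1 + p * (‖h‖ +
          α * ∑ n : Fin N, ‖(a n * b n)‖) ^ 2 / σ2)) := by
  constructor
  · refine ⟨fun n => Complex.arg h - Complex.arg (a n * b n), ?_⟩
    congr 2
    have key : h + (α : ℂ) * ∑ n : Fin N,
        Complex.exp (Complex.I * (((fun n => Complex.arg h - Complex.arg (a n * b n)) n : ℝ) : ℂ)) * (a n * b n)
        = ((‖h‖ + α * ∑ n : Fin N, ‖(a n * b n)‖ : ℝ) : ℂ)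
            * Complex.exp ((Complex.arg h : ℂ) * Complex.I) := by
      simp only [irs_exp_arg (Complex.arg h)]
      rw [← Finset.sum_mul]
      nth_rewrite 1 [← Complex.norm_mul_exp_arg_mul_I h]
      push_cast
      ring
    rw [key, norm_mul, Complex.norm_exp]
    have hnn : 0 ≤ ‖h‖ + α * ∑ n : Fin N, ‖(a n * b n)‖ := by
      positivity
    rw [Complex.norm_real, Real.norm_of_nonneg hnn]
    simp [Complex.mul_re, Complex.I_re, Complex.I_im]
  · rintro r ⟨θ, rfl⟩
    have habs : ‖(h + (α : ℂ) *
        ∑ n : Fin N, Complex.exp (Complex.I * (θ n : ℂ)) * (a n * b n))‖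
        ≤ ‖h‖ + α * ∑ n : Fin N, ‖(a n * b n)‖ := by
      refine (norm_add_le _ _).trans ?_
      apply add_le_add_right
      rw [norm_mul, Complex.norm_real, Real.norm_of_nonneg hα.le]
      apply mul_le_mul_of_nonneg_left ?_ hα.le
      refine (norm_sum_le _ _).trans ?_
      apply Finset.sum_le_sum
      intro n _
      rw [norm_mul, Complex.norm_exp]
      simp [Complex.mul_re, Complex.I_re, Complex.I_im]
    have h2 : (1:ℝ) < 2 := one_lt_two
    gcongr
    all_goals first
      | positivity
      | exact norm_nonneg _
      | exact habs
      | norm_num
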